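/- Let SD be an AL action description, σ0 a state, a0 a compound action, and β¹_d(σ0,a0) the logic program encoding SD over one time step together with facts h(l,0) for l∈σ0 and o(a,0) for a∈a0, inertia rules, and consistency constraints. Then ⟨σ0,a0,σ1⟩ is a transition of the diagram described by SD if and only if σ1 = { l : h(l,1) ∈ A } for some answer set A of β¹_d(σ0,a0). -/

import Mathlib

/-- A ground rule of A-Prolog: head (none = ⊥, i.e. a constraint),
positive body atoms, and default-negated body atoms. -/
structure ASPRule (L : Type) where
  head : Option L
  pos : Set L
  neg : Set L

/-- `Closed X Y P`: `Y` is closed under the Gelfond–Lifschitz reduct of `P`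
relative to `X`. -/
def Closed {L : Type} (X Y : Set L) (P : Set (ASPRule L)) : Prop :=
  ∀ r ∈ P, (∀ l ∈ r.neg, l ∉ X) → r.pos ⊆ Y → ∃ l, r.head = some l ∧ l ∈ Y

/-- `X` is an answer set of `P`: `X` is minimal among the sets closed under
the reduct `P^X`. -/
def AnswerSet {L : Type} (P : Set (ASPRule L)) (X : Set L) : Prop :=
  Closed X X P ∧ ∀ Y ⊆ X, Closed X Y P → Y = X

/-- A fact. -/
def fact {L : Type} (a : L) : ASPRule L := ⟨some a, ∅, ∅⟩
/-- A fluent literal: a fluent together with a sign (`true` = positive). -/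
abbrev FLit (F : Type) := F × Bool

/-- The complement of a fluent literal. -/
def fcompl {F : Type} (l : FLit F) : FLit F := (l.1, !l.2)

/-- A dynamic causal law `causes(act, hd, pre)`. -/
structure DynLaw (A F : Type) where
  act : A
  hd : FLit F
  pre : Set (FLit F)

/-- A static causal law `caused(hd, pre)`. -/
structure StatLaw (F : Type) where
  hd : FLit F
  pre : Set (FLit F)

/-- An executability condition `impossible_if(act, pre)`. -/
structure ImpLaw (A F : Type) where
  act : A
  pre : Set (FLit F)

/-- An action description of the language AL. -/
structure ActionDescr (A F : Type) where
  dyn : Set (DynLaw A F)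
  stat : Set (StatLaw F)
  imp : Set (ImpLaw A F)

/-- Completeness: each fluent or its negation belongs to `σ`. -/
def FComplete {F : Type} (σ : Set (FLit F)) : Prop :=
  ∀ f : F, (f, true) ∈ σ ∨ (f, false) ∈ σ

/-- Consistency: no fluent literal occurs together with its complement. -/
def FConsistent {F : Type} (σ : Set (FLit F)) : Prop :=
  ∀ l ∈ σ, fcompl l ∉ σ

/-- Closure under the static causal laws. -/
def ClosedStat {A F : Type} (D : ActionDescr A F) (σ : Set (FLit F)) : Prop :=
  ∀ s ∈ D.stat, s.pre ⊆ σ → s.hd ∈ σ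

/-- A state of the transition system described by `D`. -/
def IsState {A F : Type} (D : ActionDescr A F) (σ : Set (FLit F)) : Prop :=
  FComplete σ ∧ FConsistent σ ∧ ClosedStat D σ

/-- `Cn_Z(S)`: the smallest set of fluent literals containing `S` and closed
under the static causal laws of `D`. -/
def CnZ {A F : Type} (D : ActionDescr A F) (S : Set (FLit F)) : Set (FLit F) :=
  ⋂₀ { X | S ⊆ X ∧ ∀ s ∈ D.stat, s.pre ⊆ X → s.hd ∈ X }

/-- `E(a,σ)`: the direct effects of compound action `a` in `σ`. -/
def dirEff {A F : Type} (D : ActionDescr A F) (a : Set A) (σ : Set (FLit F)) :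
    Set (FLit F) :=
  { l | ∃ d ∈ D.dyn, d.act ∈ a ∧ d.pre ⊆ σ ∧ d.hd = l }

/-- The McCain–Turner transition relation: `⟨σ,a,σ'⟩` is a transition iff
`σ`,`σ'` are states, no executability condition for a member of `a` is
satisfied in `σ`, and `σ' = Cn_Z(E(a,σ) ∪ (σ ∩ σ'))`. -/
def ALTrans {A F : Type} (D : ActionDescr A F) (σ : Set (FLit F)) (a : Set A)
    (σ' : Set (FLit F)) : Prop :=
  IsState D σ ∧ IsState D σ' ∧
  (∀ i ∈ D.imp, i.act ∈ a → ¬ i.pre ⊆ σ) ∧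
  σ' = CnZ D (dirEff D a σ ∪ (σ ∩ σ'))

/-- Atoms of the direct encoding: `h(l,t)` and `o(a,t)`. -/
inductive AtomD (A F : Type) where
  | h : FLit F → ℕ → AtomD A F
  | o : A → ℕ → AtomD A F

/-- The one-step direct encoding `β¹_d(SD,σ0,a0)`: rules for dynamic laws,
static laws (at both time points), executability conditions, inertia,
consistency constraints, and the facts `h(l,0)` for `l ∈ σ0` and `o(a,0)`
for `a ∈ a0`. -/
def beta1 {A F : Type} (D : ActionDescr A F) (σ0 : Set (FLit F)) (a0 : Set A) :
    Set (ASPRule (AtomD A F)) :=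
  { r | ∃ d ∈ D.dyn,
      r = ⟨some (AtomD.h d.hd 1),
           (fun l => AtomD.h l 0) '' d.pre ∪ {AtomD.o d.act 0}, ∅⟩ } ∪
  { r | ∃ s ∈ D.stat, ∃ t ≤ 1,
      r = ⟨some (AtomD.h s.hd t), (fun l => AtomD.h l t) '' s.pre, ∅⟩ } ∪
  { r | ∃ i ∈ D.imp,
      r = ⟨none, (fun l => AtomD.h l 0) '' i.pre ∪ {AtomD.o i.act 0}, ∅⟩ } ∪
  { r | ∃ l : FLit F,
      r = ⟨some (AtomD.h l 1), {AtomD.h l 0}, {AtomD.h (fcompl l) 1}⟩ } ∪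
  { r | ∃ l : FLit F, ∃ t ≤ 1,
      r = ⟨none, {AtomD.h l t, AtomD.h (fcompl l) t}, ∅⟩ } ∪
  { r | ∃ l ∈ σ0, r = fact (AtomD.h l 0) } ∪
  { r | ∃ a ∈ a0, r = fact (AtomD.o a 0) }

/-!
The transition `⟨σ0, a0, σ1⟩` corresponds to the answer set
`{h(l,0) | l ∈ σ0} ∪ {o(a,0) | a ∈ a0} ∪ {h(l,1) | l ∈ σ1}`. Relative to a set whose time-1
part `σ1` is consistent, the reduct of the inertia rules is `h(l,1) ← h(l,0)` for `l ∈ σ1`,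
so the time-1 part of every set closed under the reduct contains
`C = Cn_Z(E(a0,σ0) ∪ (σ0 ∩ σ1))`. For a transition `σ1 = C`, which gives minimality.
Conversely, for an answer set `X` the candidate built from `C ⊆ σ1` is itself closed under
the reduct relative to `X`, so minimality of `X` forces `σ1 = C`, the McCain–Turner equation;
completeness of `σ1` comes from inertia and completeness of `σ0`.
-/

section

variable {A F : Type}

@[simp]
theorem fcompl_fcompl (l : FLit F) : fcompl (fcompl l) = l := by
  simp [fcompl]

theorem fComplete_iff {σ : Set (FLit F)} : FComplete σ ↔ ∀ l, l ∈ σ ∨ fcompl l ∈ σ := by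
  refine ⟨fun h ⟨f, b⟩ => ?_, fun h f => h (f, true)⟩
  cases b <;> simpa [fcompl, or_comm] using h f

theorem FComplete.of_mem_or_fcompl_mem {σ τ : Set (FLit F)} (hσ : FComplete σ)
    (h : ∀ l ∈ σ, l ∈ τ ∨ fcompl l ∈ τ) : FComplete τ := by
  rw [fComplete_iff] at hσ ⊢
  intro l
  rcases hσ l with hl | hl
  · exact h l hl
  · simpa [or_comm] using h _ hl

theorem FConsistent.subset {σ τ : Set (FLit F)} (hσ : FConsistent σ) (h : τ ⊆ σ) :
    FConsistent τ :=
  fun l hl hlc => hσ l (h hl) (h hlc)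

section CnZ

variable (D : ActionDescr A F) {S X : Set (FLit F)}

theorem subset_CnZ : S ⊆ CnZ D S :=
  fun _ hl _ hX => hX.1 hl

theorem closedStat_CnZ : ClosedStat D (CnZ D S) :=
  fun s hs hpre _ hX => hX.2 s hs fun _ hl => hpre hl _ hX

variable {D} in
theorem CnZ_subset_of_closedStat (hS : S ⊆ X) (hX : ClosedStat D X) : CnZ D S ⊆ X :=
  fun _ hl => hl X ⟨hS, hX⟩

end CnZ

def transitionAtoms (σ0 : Set (FLit F)) (a0 : Set A) (σ1 : Set (FLit F)) :
    Set (AtomD A F) :=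
  { x | match x with
    | .h l 0 => l ∈ σ0
    | .h l 1 => l ∈ σ1
    | .o a 0 => a ∈ a0
    | _ => False }

@[simp]
theorem setOf_h_one_mem_transitionAtoms (σ0 : Set (FLit F)) (a0 : Set A) (σ1 : Set (FLit F)) :
    {l | AtomD.h l 1 ∈ transitionAtoms σ0 a0 σ1} = σ1 :=
  rfl

section Beta1

variable {D : ActionDescr A F} {σ0 : Set (FLit F)} {a0 : Set A}

theorem closed_beta1_iff {Z Y : Set (AtomD A F)} :
    Closed Z Y (beta1 D σ0 a0) ↔
      (∀ d ∈ D.dyn, (∀ l ∈ d.pre, AtomD.h l 0 ∈ Y) → AtomD.o d.act 0 ∈ Y →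
        AtomD.h d.hd 1 ∈ Y) ∧
      (∀ s ∈ D.stat, ∀ t ≤ 1, (∀ l ∈ s.pre, AtomD.h l t ∈ Y) → AtomD.h s.hd t ∈ Y) ∧
      (∀ i ∈ D.imp, (∀ l ∈ i.pre, AtomD.h l 0 ∈ Y) → AtomD.o i.act 0 ∉ Y) ∧
      (∀ l, AtomD.h (fcompl l) 1 ∉ Z → AtomD.h l 0 ∈ Y → AtomD.h l 1 ∈ Y) ∧
      (∀ l, ∀ t ≤ 1, AtomD.h l t ∈ Y → AtomD.h (fcompl l) t ∉ Y) ∧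
      (∀ l ∈ σ0, AtomD.h l 0 ∈ Y) ∧
      (∀ a ∈ a0, AtomD.o a 0 ∈ Y) := by
  simp only [Closed, beta1, fact, Set.mem_union, Set.mem_ofPred_eq, or_imp, forall_and,
    forall_exists_index, and_imp, forall_comm (α := ASPRule (AtomD A F)), ← imp_forall_iff,
    forall_eq, Set.mem_empty_iff_false, Set.subset_def, Set.mem_singleton_iff,
    Option.some.injEq, exists_eq_left', reduceCtorEq, false_and, exists_false,
    IsEmpty.forall_iff, implies_true, forall_const, imp_false, Set.forall_mem_image,
    Set.forall_mem_insert, not_and, and_assoc]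

namespace Closed

variable {Z Y : Set (AtomD A F)}

theorem h_zero_mem (hC : Closed Z Y (beta1 D σ0 a0)) {l : FLit F} (hl : l ∈ σ0) :
    AtomD.h l 0 ∈ Y := by
  obtain ⟨-, -, -, -, -, hfact, -⟩ := closed_beta1_iff.1 hC
  exact hfact l hl

theorem o_zero_mem (hC : Closed Z Y (beta1 D σ0 a0)) {a : A} (ha : a ∈ a0) :
    AtomD.o a 0 ∈ Y := by
  obtain ⟨-, -, -, -, -, -, hfact⟩ := closed_beta1_iff.1 hC
  exact hfact a ha

theorem dirEff_subset (hC : Closed Z Y (beta1 D σ0 a0)) :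
    dirEff D a0 σ0 ⊆ {l | AtomD.h l 1 ∈ Y} := by
  obtain ⟨hdyn, -⟩ := closed_beta1_iff.1 hC
  rintro _ ⟨d, hd, hact, hpre, rfl⟩
  exact hdyn d hd (fun l hl => hC.h_zero_mem (hpre hl)) (hC.o_zero_mem hact)

theorem closedStat_one (hC : Closed Z Y (beta1 D σ0 a0)) :
    ClosedStat D {l | AtomD.h l 1 ∈ Y} := by
  obtain ⟨-, hstat, -⟩ := closed_beta1_iff.1 hC
  exact fun s hs hpre => hstat s hs 1 le_rfl hpre

theorem executable (hC : Closed Z Y (beta1 D σ0 a0)) :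
    ∀ i ∈ D.imp, i.act ∈ a0 → ¬ i.pre ⊆ σ0 := by
  obtain ⟨-, -, himp, -⟩ := closed_beta1_iff.1 hC
  exact fun i hi hact hpre =>
    himp i hi (fun l hl => hC.h_zero_mem (hpre hl)) (hC.o_zero_mem hact)

theorem h_one_mem_of_inertia (hC : Closed Z Y (beta1 D σ0 a0)) {l : FLit F} (hl : l ∈ σ0)
    (hZ : AtomD.h (fcompl l) 1 ∉ Z) : AtomD.h l 1 ∈ Y := by
  obtain ⟨-, -, -, hinert, -⟩ := closed_beta1_iff.1 hC
  exact hinert l hZ (hC.h_zero_mem hl)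

theorem fConsistent_one (hC : Closed Z Y (beta1 D σ0 a0)) :
    FConsistent {l | AtomD.h l 1 ∈ Y} := by
  obtain ⟨-, -, -, -, hcons, -⟩ := closed_beta1_iff.1 hC
  exact fun l hl => hcons l 1 le_rfl hl

theorem CnZ_subset (hC : Closed Z Y (beta1 D σ0 a0)) {S : Set (FLit F)}
    (hS : ∀ l ∈ S, AtomD.h (fcompl l) 1 ∉ Z) :
    CnZ D (dirEff D a0 σ0 ∪ (σ0 ∩ S)) ⊆ {l | AtomD.h l 1 ∈ Y} :=
  CnZ_subset_of_closedStat
    (Set.union_subset hC.dirEff_subset fun l hl => hC.h_one_mem_of_inertia hl.1 (hS l hl.2))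
    hC.closedStat_one

theorem transitionAtoms_subset (hC : Closed Z Y (beta1 D σ0 a0)) {S : Set (FLit F)}
    (hS : S ⊆ {l | AtomD.h l 1 ∈ Y}) : transitionAtoms σ0 a0 S ⊆ Y := by
  rintro (⟨_, _ | _ | _⟩ | ⟨_, _ | _⟩) hx
  exacts [hC.h_zero_mem hx, hS hx, hx.elim, hC.o_zero_mem hx, hx.elim]

end Closed

theorem closed_transitionAtoms {S : Set (FLit F)} {Z : Set (AtomD A F)}
    (hcons0 : FConsistent σ0) (hstat0 : ClosedStat D σ0)
    (hcons : FConsistent S) (hstat : ClosedStat D S) (hE : dirEff D a0 σ0 ⊆ S)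
    (himp : ∀ i ∈ D.imp, i.act ∈ a0 → ¬ i.pre ⊆ σ0)
    (hinert : ∀ l ∈ σ0, AtomD.h (fcompl l) 1 ∉ Z → l ∈ S) :
    Closed Z (transitionAtoms σ0 a0 S) (beta1 D σ0 a0) := by
  refine closed_beta1_iff.2 ⟨fun d hd hpre hact => hE ⟨d, hd, hact, hpre, rfl⟩,
    fun s hs t ht hpre => ?_, fun i hi hpre hact => himp i hi hact hpre,
    fun l hZ hl => hinert l hl hZ, fun l t ht hl hlc => ?_, fun _ hl => hl, fun _ ha => ha⟩
  · rcases Nat.le_one_iff_eq_zero_or_eq_one.1 ht with rfl | rfl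
    exacts [hstat0 s hs hpre, hstat s hs hpre]
  · rcases Nat.le_one_iff_eq_zero_or_eq_one.1 ht with rfl | rfl
    exacts [hcons0 l hl hlc, hcons l hl hlc]

theorem answerSet_transitionAtoms_of_alTrans {σ1 : Set (FLit F)} (h : ALTrans D σ0 a0 σ1) :
    AnswerSet (beta1 D σ0 a0) (transitionAtoms σ0 a0 σ1) := by
  obtain ⟨⟨-, hcons0, hstat0⟩, ⟨hcomp1, hcons1, hstat1⟩, himp, heq⟩ := h
  have hE : dirEff D a0 σ0 ⊆ σ1 :=
    (Set.subset_union_left.trans (subset_CnZ D)).trans heq.superset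
  have hinert (l) (_ : l ∈ σ0) (hl : fcompl l ∉ σ1) : l ∈ σ1 :=
    (fComplete_iff.1 hcomp1 l).resolve_right hl
  refine ⟨closed_transitionAtoms hcons0 hstat0 hcons1 hstat1 hE himp hinert,
    fun Y hYX hY => hYX.antisymm (hY.transitionAtoms_subset ?_)⟩
  exact heq.trans_subset (hY.CnZ_subset hcons1)

theorem alTrans_of_answerSet (hσ0 : IsState D σ0) {X : Set (AtomD A F)}
    (hX : AnswerSet (beta1 D σ0 a0) X) : ALTrans D σ0 a0 {l | AtomD.h l 1 ∈ X} := by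
  obtain ⟨hXX, hmin⟩ := hX
  set σ1 := {l | AtomD.h l 1 ∈ X}
  set C := CnZ D (dirEff D a0 σ0 ∪ (σ0 ∩ σ1))
  have hcons1 : FConsistent σ1 := hXX.fConsistent_one
  have hCσ1 : C ⊆ σ1 := hXX.CnZ_subset hcons1
  have hXC : transitionAtoms σ0 a0 C = X := hmin _ (hXX.transitionAtoms_subset hCσ1) <|
    closed_transitionAtoms hσ0.2.1 hσ0.2.2 (hcons1.subset hCσ1) (closedStat_CnZ D)
      (Set.subset_union_left.trans (subset_CnZ D)) hXX.executable
      fun l hl hZ => subset_CnZ D (Or.inr ⟨hl, hXX.h_one_mem_of_inertia hl hZ⟩)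
  have hσ1C : σ1 = C := congrArg (fun Y => {l | AtomD.h l 1 ∈ Y}) hXC.symm
  have hcomp1 : FComplete σ1 := hσ0.1.of_mem_or_fcompl_mem fun l hl => by
    by_cases hZ : fcompl l ∈ σ1
    exacts [Or.inr hZ, Or.inl (hXX.h_one_mem_of_inertia hl hZ)]
  exact ⟨hσ0, ⟨hcomp1, hcons1, hXX.closedStat_one⟩, hXX.executable, hσ1C⟩

end Beta1

end

/-- for a state `σ0` and compound action `a0`, `⟨σ0,a0,σ1⟩` is a
transition of the diagram described by `SD` iff `σ1 = { l : h(l,1) ∈ A }` for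
some answer set `A` of `β¹_d(σ0,a0)`. -/
theorem beta1_transition {A F : Type} (D : ActionDescr A F)
    (σ0 : Set (FLit F)) (a0 : Set A) (hσ0 : IsState D σ0) (σ1 : Set (FLit F)) :
    ALTrans D σ0 a0 σ1 ↔
      ∃ X : Set (AtomD A F), AnswerSet (beta1 D σ0 a0) X ∧
        σ1 = { l | AtomD.h l 1 ∈ X } := by
  constructor
  · intro h
    exact ⟨_, answerSet_transitionAtoms_of_alTrans h, (setOf_h_one_mem_transitionAtoms ..).symm⟩
  · rintro ⟨X, hX, rfl⟩
    exact alTrans_of_answerSet hσ0 hX
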